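/- Let θ₀ > 0 and set k = θ₀ A and δ = A γ. For the constant transmission rate θ(x) ≡ θ₀ and the linear population p(x) = N₀(1 - x/A) with N = N₀ A / 2, the basic reproductive number satisfies R₀ = (2θ₀/A) ∫₀^A (1 - x/A) e^{-γx} (∫₀^x e^{γs} ds) dx = (k/δ³) [(δ - 1)² + 1 - 2 e^{-δ}]. -/

import Mathlib

open MeasureTheory Real Set Filter

/-- `Λ(x,s) = ∫_s^x θ(t) dt`. -/
noncomputable def Lam (θ : ℝ → ℝ) (x s : ℝ) : ℝ := ∫ t in s..x, θ t

/-- `w(x;Q) = Q e^{-γx} ∫₀^x e^{γs} θ(s) e^{-Q Λ(x,s)} ds`. -/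
noncomputable def w (γ : ℝ) (θ : ℝ → ℝ) (Q x : ℝ) : ℝ :=
  Q * Real.exp (-γ * x) * ∫ s in (0:ℝ)..x, Real.exp (γ * s) * θ s * Real.exp (-Q * Lam θ x s)
/-- The kernel `k(x,s) = (p(x)/N)·θ(s)·e^{-γ(x-s)}`. -/
noncomputable def kker (γ N : ℝ) (p θ : ℝ → ℝ) (x s : ℝ) : ℝ :=
  (p x / N) * θ s * Real.exp (-γ * (x - s))

/-- The triangle `Ω = {(x,s) : 0 ≤ s ≤ x ≤ A}` (first coordinate `x`, second `s`). -/
def Tri (A : ℝ) : Set (ℝ × ℝ) := {q | 0 ≤ q.2 ∧ q.2 ≤ q.1 ∧ q.1 ≤ A}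

/-- Basic reproductive number `R₀ = ∬_Ω k(x,s) d(s,x)`. -/
noncomputable def R0 (γ N A : ℝ) (p θ : ℝ → ℝ) : ℝ :=
  ∫ q in Tri A, kker γ N p θ q.1 q.2

/-- `F(Q) = 1 - ∬_Ω k(x,s) e^{-Q Λ(x,s)} d(s,x)`. -/
noncomputable def FF (γ N A : ℝ) (p θ : ℝ → ℝ) (Q : ℝ) : ℝ :=
  1 - ∫ q in Tri A, kker γ N p θ q.1 q.2 * Real.exp (-Q * Lam θ q.1 q.2)

/-- Iteration map `T(Q) = Q·(1 - F(Q))`. -/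
noncomputable def TT (γ N A : ℝ) (p θ : ℝ → ℝ) (Q : ℝ) : ℝ :=
  Q * (1 - FF γ N A p θ Q)

/-! Fubini turns `R₀` into an iterated integral over `0 ≤ s ≤ x ≤ A`. For these data the kernel
factors as `(2θ₀/A)(1 - x/A)e^{-γx}e^{γs}`, the inner integral is `(1 - e^{-γx})/γ`, and the outer
one is elementary: `(1 - x/A)(1 - e^{-γx})` has the antiderivative
`x - x²/(2A) + ((1 - x/A)/γ - 1/(Aγ²))e^{-γx}`. -/

lemma isClosed_tri (A : ℝ) : IsClosed (Tri A) :=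
  (isClosed_le continuous_const continuous_snd).inter
    ((isClosed_le continuous_snd continuous_fst).inter (isClosed_le continuous_fst continuous_const))

lemma isCompact_tri (A : ℝ) : IsCompact (Tri A) :=
  isCompact_Icc.of_isClosed_subset (isClosed_tri A)
    (fun _ ⟨h0, hsx, hxA⟩ => ⟨⟨h0.trans hsx, h0⟩, ⟨hxA, hsx.trans hxA⟩⟩ :
      Tri A ⊆ Icc ((0 : ℝ), (0 : ℝ)) (A, A))

lemma indicator_tri_apply (A : ℝ) (f : ℝ × ℝ → ℝ) (x s : ℝ) :
    (Tri A).indicator f (x, s) =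
      (Icc 0 A).indicator (fun x => (Icc 0 x).indicator (fun s => f (x, s)) s) x := by
  simp only [indicator_apply, Tri, mem_ofPred_eq, mem_Icc]
  split_ifs <;> grind

lemma setIntegral_tri_eq_intervalIntegral {A : ℝ} (hA : 0 ≤ A) {f : ℝ → ℝ → ℝ}
    (hf : Continuous fun q : ℝ × ℝ => f q.1 q.2) :
    ∫ q in Tri A, f q.1 q.2 = ∫ x in (0 : ℝ)..A, ∫ s in (0 : ℝ)..x, f x s := by
  have hmeas : MeasurableSet (Tri A) := (isClosed_tri A).measurableSet
  have hint : Integrable ((Tri A).indicator fun q : ℝ × ℝ => f q.1 q.2) :=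
    (integrable_indicator_iff hmeas).2 (hf.continuousOn.integrableOn_compact (isCompact_tri A))
  have hinner : ∀ x, ∫ s, (Tri A).indicator (fun q : ℝ × ℝ => f q.1 q.2) (x, s) =
      (Icc 0 A).indicator (fun x => ∫ s in (0 : ℝ)..x, f x s) x := by
    intro x
    simp only [indicator_tri_apply]
    by_cases hx : x ∈ Icc 0 A
    · simp only [indicator_of_mem hx]
      rw [integral_indicator measurableSet_Icc, integral_Icc_eq_integral_Ioc,
        intervalIntegral.integral_of_le hx.1]
    · simp only [indicator_of_notMem hx, integral_zero]
  rw [← integral_indicator hmeas, Measure.volume_eq_prod, integral_prod _ hint]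
  simp only [hinner]
  rw [integral_indicator measurableSet_Icc, integral_Icc_eq_integral_Ioc,
    intervalIntegral.integral_of_le hA]

lemma R0_eq_intervalIntegral {γ N A : ℝ} (hA : 0 ≤ A) {p θ : ℝ → ℝ} (hp : Continuous p)
    (hθ : Continuous θ) :
    R0 γ N A p θ = ∫ x in (0 : ℝ)..A, ∫ s in (0 : ℝ)..x, kker γ N p θ x s :=
  setIntegral_tri_eq_intervalIntegral hA (by unfold kker; fun_prop)

lemma kker_linear_const {γ A N₀ : ℝ} (hA : A ≠ 0) (hN₀ : N₀ ≠ 0) (θ₀ x s : ℝ) :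
    kker γ (N₀ * A / 2) (fun x => N₀ * (1 - x / A)) (fun _ => θ₀) x s =
      2 * θ₀ / A * ((1 - x / A) * exp (-γ * x) * exp (γ * s)) := by
  rw [kker, show -γ * (x - s) = -γ * x + γ * s by ring, exp_add]
  field_simp

lemma integral_exp_mul {c : ℝ} (hc : c ≠ 0) (a b : ℝ) :
    ∫ x in a..b, exp (c * x) = (exp (c * b) - exp (c * a)) / c := by
  rw [intervalIntegral.integral_comp_mul_left exp hc, integral_exp, smul_eq_mul, inv_mul_eq_div]

lemma hasDerivAt_antideriv_one_sub_div_mul_one_sub_exp {γ A : ℝ} (hγ : γ ≠ 0) (hA : A ≠ 0)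
    (x : ℝ) :
    HasDerivAt (fun x => x - x ^ 2 / (2 * A) + ((1 - x / A) / γ - 1 / (A * γ ^ 2)) * exp (-γ * x))
      ((1 - x / A) * (1 - exp (-γ * x))) x := by
  have hexp : HasDerivAt (fun x => exp (-γ * x)) (exp (-γ * x) * -γ) x :=
    ((hasDerivAt_id x).const_mul (-γ) |>.congr_deriv (mul_one _)).exp
  have hpoly : HasDerivAt (fun x => x - x ^ 2 / (2 * A)) (1 - (2 * x ^ 1) / (2 * A)) x :=
    (hasDerivAt_id x).sub ((hasDerivAt_pow 2 x).div_const _) |>.congr_deriv (by simp)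
  have hcoef : HasDerivAt (fun x => (1 - x / A) / γ - 1 / (A * γ ^ 2)) (-(1 / A) / γ) x :=
    ((((hasDerivAt_id x).div_const A).const_sub 1).div_const γ).sub_const _
      |>.congr_deriv (by simp)
  refine (hpoly.add (hcoef.mul hexp)).congr_deriv ?_
  field_simp
  ring

lemma integral_one_sub_div_mul_one_sub_exp {γ A : ℝ} (hγ : γ ≠ 0) (hA : A ≠ 0) :
    ∫ x in (0 : ℝ)..A, (1 - x / A) * (1 - exp (-γ * x)) =
      A / 2 - 1 / γ + 1 / (A * γ ^ 2) - exp (-(A * γ)) / (A * γ ^ 2) := by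
  rw [intervalIntegral.integral_eq_sub_of_hasDerivAt
    (fun x _ => hasDerivAt_antideriv_one_sub_div_mul_one_sub_exp hγ hA x)
    (by apply Continuous.intervalIntegrable; fun_prop)]
  rw [show -γ * A = -(A * γ) by ring, mul_zero, exp_zero]
  field_simp
  ring

theorem R0_simplified_general (γ A N₀ θ₀ : ℝ) (hγ : 0 < γ) (hA : 0 < A) (hN₀ : 0 < N₀) :
    R0 γ (N₀ * A / 2) A (fun x => N₀ * (1 - x / A)) (fun _ => θ₀)
      = (2 * θ₀ / A) * ∫ x in (0:ℝ)..A,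
          (1 - x / A) * Real.exp (-γ * x) * ∫ s in (0:ℝ)..x, Real.exp (γ * s) ∧
    R0 γ (N₀ * A / 2) A (fun x => N₀ * (1 - x / A)) (fun _ => θ₀)
      = (θ₀ * A) / (A * γ)^3 *
          ((A * γ - 1)^2 + 1 - 2 * Real.exp (-(A * γ))) := by
  have hfirst : R0 γ (N₀ * A / 2) A (fun x => N₀ * (1 - x / A)) (fun _ => θ₀)
      = (2 * θ₀ / A) * ∫ x in (0:ℝ)..A,
          (1 - x / A) * exp (-γ * x) * ∫ s in (0:ℝ)..x, exp (γ * s) := by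
    rw [R0_eq_intervalIntegral hA.le (by fun_prop) continuous_const]
    simp only [kker_linear_const hA.ne' hN₀.ne', intervalIntegral.integral_const_mul]
  have hinner : ∀ x, (1 - x / A) * exp (-γ * x) * ∫ s in (0:ℝ)..x, exp (γ * s) =
      (1 - x / A) * (1 - exp (-γ * x)) / γ := by
    intro x
    rw [integral_exp_mul hγ.ne', mul_zero, exp_zero, mul_div_assoc', mul_assoc, mul_sub,
      ← exp_add, show -γ * x + γ * x = 0 by ring, exp_zero, mul_one]
  refine ⟨hfirst, ?_⟩
  rw [hfirst]
  simp only [hinner, intervalIntegral.integral_div,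
    integral_one_sub_div_mul_one_sub_exp hγ.ne' hA.ne']
  field_simp
  ring

/-- for constant transmission rate `θ ≡ θ₀` and linear population
`p(x) = N₀(1 - x/A)` with `N = N₀A/2`, the basic reproductive number equals
`(2θ₀/A)∫₀^A (1-x/A)e^{-γx}(∫₀^x e^{γs} ds) dx = (k/δ³)[(δ-1)² + 1 - 2e^{-δ}]`
with `k = θ₀A`, `δ = Aγ`. -/
theorem R0_simplified (γ A N₀ θ₀ : ℝ) (hγ : 0 < γ) (hA : 0 < A) (hN₀ : 0 < N₀)
    (hθ₀ : 0 < θ₀) :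
    R0 γ (N₀ * A / 2) A (fun x => N₀ * (1 - x / A)) (fun _ => θ₀)
      = (2 * θ₀ / A) * ∫ x in (0:ℝ)..A,
          (1 - x / A) * Real.exp (-γ * x) * ∫ s in (0:ℝ)..x, Real.exp (γ * s) ∧
    R0 γ (N₀ * A / 2) A (fun x => N₀ * (1 - x / A)) (fun _ => θ₀)
      = (θ₀ * A) / (A * γ)^3 *
          ((A * γ - 1)^2 + 1 - 2 * Real.exp (-(A * γ))) :=
  R0_simplified_general γ A N₀ θ₀ hγ hA hN₀
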